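/- Let L₁ be the 3-dimensional complex ω-Lie algebra with ordered basis (x,y,z) defined by [x,y] = y, [x,z] = 0, [y,z] = z and ω(x,y) = 1, ω(x,z) = ω(y,z) = 0. A linear operator R on L₁, with matrix entries r_{ij} ∈ ℂ determined by R(e_i) = Σ_j r_{ij} e_j relative to (e₁,e₂,e₃) = (x,y,z), is an isometric Rota-Baxter operator of weight 1 on L₁ if and only if there exist a,b ∈ ℂ such that the matrix (r_{ij}) equals one of the following three matrices: rows ((−1, a, b), (0, −1, 0), (0, 0, −1)); rows ((−1, −1, a), (0, −1, b), (0, 0, −1)); rows ((−1, a, −ab−b), (0, −1, b), (0, 0, 0)). -/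
import Mathlib


/-- The bracket of the 3-dimensional complex ω-Lie algebra `L₁`, with ordered basis
`(x, y, z) = (e₀, e₁, e₂)`, determined by `[x,y] = y`, `[x,z] = 0`, `[y,z] = z`. -/
def L1bracket (u v : Fin 3 → ℂ) : Fin 3 → ℂ :=
  ![0, u 0 * v 1 - u 1 * v 0, u 1 * v 2 - u 2 * v 1]

/-- The form `ω` of `L₁`, determined by `ω(x,y) = 1`, `ω(x,z) = ω(y,z) = 0`. -/
def L1omega (u v : Fin 3 → ℂ) : ℂ := u 0 * v 1 - u 1 * v 0

/-- A linear operator `R` on `L₁` is an isometric Rota-Baxter operator of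
weight 1 iff its matrix `(r i j) = (R(eᵢ)ⱼ)` has one of three explicit forms. -/
theorem isometric_rotaBaxter_weight_one_on_L1_iff
    (R : (Fin 3 → ℂ) →ₗ[ℂ] (Fin 3 → ℂ))
    (r : Fin 3 → Fin 3 → ℂ) (hr : ∀ i j, r i j = R (Pi.single i 1) j) :
    ((∀ u v, L1bracket (R u) (R v)
        = R (L1bracket (R u) v + L1bracket u (R v) + L1bracket u v)) ∧
      (∀ u v, L1omega (R u) (R v) = L1omega u v)) ↔
    (∃ a b : ℂ,
      r = ![![-1, a, b], ![0, -1, 0], ![0, 0, -1]] ∨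
      r = ![![-1, -1, a], ![0, -1, b], ![0, 0, -1]] ∨
      r = ![![-1, a, -a * b - b], ![0, -1, b], ![0, 0, 0]]) := by
  have hu : ∀ u : Fin 3 → ℂ,
      u = u 0 • (Pi.single 0 1 : Fin 3 → ℂ) + u 1 • (Pi.single 1 1 : Fin 3 → ℂ)
        + u 2 • (Pi.single 2 1 : Fin 3 → ℂ) := by
    intro u; funext j; fin_cases j <;> simp [Pi.single_apply]
  have hRall : ∀ (u : Fin 3 → ℂ) (j : Fin 3),
      R u j = u 0 * r 0 j + u 1 * r 1 j + u 2 * r 2 j := by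
    intro u j
    conv_lhs => rw [hu u]
    simp [map_add, map_smul, Pi.add_apply, Pi.smul_apply, smul_eq_mul, ← hr]
  constructor
  · rintro ⟨hRB, hω⟩
    have A : r 0 0 * r 1 1 - r 0 1 * r 1 0 = 1 := by
      have h := hω (Pi.single 0 1) (Pi.single 1 1)
      simp [L1omega, hRall, Pi.single_apply] at h
      linear_combination h
    have B : r 0 0 * r 2 1 - r 0 1 * r 2 0 = 0 := by
      have h := hω (Pi.single 0 1) (Pi.single 2 1)
      simp [L1omega, hRall, Pi.single_apply] at h
      linear_combination h
    have C : r 1 0 * r 2 1 - r 1 1 * r 2 0 = 0 := by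
      have h := hω (Pi.single 1 1) (Pi.single 2 1)
      simp [L1omega, hRall, Pi.single_apply] at h
      linear_combination h
    have D : (r 0 0 + r 1 1 + 1) * r 1 0 - r 0 2 * r 2 0 = 0 := by
      have h := congrFun (hRB (Pi.single 0 1) (Pi.single 1 1)) 0
      simp [L1bracket, hRall, Pi.single_apply, Pi.add_apply] at h
      linear_combination -h
    have E : r 0 0 * r 1 1 - r 0 1 * r 1 0
        = (r 0 0 + r 1 1 + 1) * r 1 1 - r 0 2 * r 2 1 := by
      have h := congrFun (hRB (Pi.single 0 1) (Pi.single 1 1)) 1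
      simp [L1bracket, hRall, Pi.single_apply, Pi.add_apply] at h
      linear_combination h
    have F : r 0 1 * r 1 2 - r 0 2 * r 1 1
        = (r 0 0 + r 1 1 + 1) * r 1 2 - r 0 2 * r 2 2 := by
      have h := congrFun (hRB (Pi.single 0 1) (Pi.single 1 1)) 2
      simp [L1bracket, hRall, Pi.single_apply, Pi.add_apply] at h
      linear_combination h
    have L : r 1 1 * r 2 2 - r 1 2 * r 2 1
        = -(r 2 0 * r 1 2) + (r 1 1 + r 2 2 + 1) * r 2 2 := by
      have h := congrFun (hRB (Pi.single 1 1) (Pi.single 2 1)) 2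
      simp [L1bracket, hRall, Pi.single_apply, Pi.add_apply] at h
      linear_combination h
    have h21 : r 2 1 = 0 := by
      linear_combination (-(r 2 1)) * A + (r 1 1) * B + (-(r 0 1)) * C
    have h20 : r 2 0 = 0 := by
      linear_combination (-(r 2 0)) * A + (r 1 0) * B + (-(r 0 0)) * C
    have hE2 : (r 0 0 + r 1 1 + 1) * r 1 1 = 1 := by
      linear_combination A - E + (r 0 2) * h21
    have hne : r 0 0 + r 1 1 + 1 ≠ 0 := by
      intro h; rw [h, zero_mul] at hE2; exact zero_ne_one hE2
    have h11ne : r 1 1 ≠ 0 := by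
      intro h; rw [h, mul_zero] at hE2; exact zero_ne_one hE2
    have h10 : r 1 0 = 0 := by
      have hq : (r 0 0 + r 1 1 + 1) * r 1 0 = 0 := by
        linear_combination D + (r 0 2) * h20
      exact (mul_eq_zero.mp hq).resolve_left hne
    have h11 : r 1 1 = -1 := by
      have hq : (r 1 1 + 1) * r 1 1 = 0 := by
        linear_combination hE2 - A - (r 0 1) * h10
      have := (mul_eq_zero.mp hq).resolve_right h11ne
      linear_combination this
    have h00 : r 0 0 = -1 := by
      linear_combination -A + (r 0 0) * h11 - (r 0 1) * h10
    have hL : r 2 2 * (r 2 2 + 1) = 0 := by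
      linear_combination -L - (r 1 2) * h21 + (r 1 2) * h20
    have hF' : (r 0 1 + 1) * r 1 2 + r 0 2 * (1 + r 2 2) = 0 := by
      linear_combination F + (r 0 2) * h11 + (r 1 2) * h00 + (r 1 2) * h11
    rcases mul_eq_zero.mp hL with h22 | h22
    · -- r 2 2 = 0 : family 3
      have h02 : r 0 2 = -(r 0 1) * r 1 2 - r 1 2 := by
        linear_combination hF' - (r 0 2) * h22
      refine ⟨r 0 1, r 1 2, Or.inr (Or.inr ?_)⟩
      funext i j
      fin_cases i <;> fin_cases j <;>
        simp [h00, h02, h10, h11, h20, h21, h22, Matrix.vecHead, Matrix.vecTail]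
    · have h22 : r 2 2 = -1 := by linear_combination h22
      have hq : (r 0 1 + 1) * r 1 2 = 0 := by
        linear_combination hF' - (r 0 2) * h22
      rcases mul_eq_zero.mp hq with h01 | h12
      · -- r 0 1 = -1 : family 2
        have h01 : r 0 1 = -1 := by linear_combination h01
        refine ⟨r 0 2, r 1 2, Or.inr (Or.inl ?_)⟩
        funext i j
        fin_cases i <;> fin_cases j <;>
          simp [h00, h01, h10, h11, h20, h21, h22, Matrix.vecHead, Matrix.vecTail]
      · -- r 1 2 = 0 : family 1
        refine ⟨r 0 1, r 0 2, Or.inl ?_⟩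
        funext i j
        fin_cases i <;> fin_cases j <;>
          simp [h00, h10, h11, h12, h20, h21, h22, Matrix.vecHead, Matrix.vecTail]
  · rintro ⟨a, b, h | h | h⟩ <;> subst h <;>
      refine ⟨fun u v => funext fun k => ?_, fun u v => ?_⟩ <;>
      first
        | (fin_cases k <;>
            simp [L1bracket, hRall, Pi.add_apply, Matrix.vecHead, Matrix.vecTail] <;>
            ring_nf)
        | (simp [L1omega, hRall, Matrix.vecHead, Matrix.vecTail]; ring_nf)
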